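/- Let f be a Fibonacci map. Then for every n ≥ 1, the iterate f^{S_n} is strictly monotone on the interval between u_n and c. -/

import Mathlib

noncomputable section

/-- The Fibonacci numbers `S 0 = 1`, `S 1 = 2`, `S (k+2) = S (k+1) + S k`. -/
def fibS : ℕ → ℕ
  | 0 => 1
  | 1 => 2
  | n + 2 => fibS (n + 1) + fibS n

/-- `f : [0,1] → [0,1]` is unimodal with critical point `c`: continuous, maps `[0,1]` into
itself, `f 0 = f 1 = 0`, `c ∈ (0,1)`, strictly increasing on `[0,c]`, strictly decreasing
on `[c,1]`. -/
def IsUnimodal (f : ℝ → ℝ) (c : ℝ) : Prop :=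
  ContinuousOn f (Set.Icc 0 1) ∧ Set.MapsTo f (Set.Icc 0 1) (Set.Icc 0 1) ∧
  f 0 = 0 ∧ f 1 = 0 ∧ c ∈ Set.Ioo (0 : ℝ) 1 ∧
  StrictMonoOn f (Set.Icc 0 c) ∧ StrictAntiOn f (Set.Icc c 1)

/-- `f` is symmetric about `c`: `f (2c - x) = f x` whenever both points lie in `[0,1]`
(the symmetric point of `x` is `x̂ = 2c - x`). -/
def SymmetricAbout (f : ℝ → ℝ) (c : ℝ) : Prop :=
  ∀ x ∈ Set.Icc (0 : ℝ) 1, 2 * c - x ∈ Set.Icc (0 : ℝ) 1 → f (2 * c - x) = f x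

/-- The distance from `c` to a nearest `k`-th preimage `c₋ₖ` of `c` in `[0,1]`,
i.e. `|c₋ₖ - c| = |c₋ₖ|`. -/
def preimDist (f : ℝ → ℝ) (c : ℝ) (k : ℕ) : ℝ :=
  sInf ((fun x => |x - c|) '' {x | x ∈ Set.Icc (0 : ℝ) 1 ∧ f^[k] x = c})

/-- `S` is the sequence of cutting times of `f`: `S 0 = 1`, and `S (i+1)` is the least
`k ≥ S i` for which the nearest `k`-th preimage `c₋ₖ` of `c` lies in the symmetric open
interval `(c₋ₛᵢ, (c₋ₛᵢ)^)`, i.e. `c₋ₖ` exists and is strictly closer to `c` than `c₋ₛᵢ`. -/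
def IsCuttingSeq (f : ℝ → ℝ) (c : ℝ) (S : ℕ → ℕ) : Prop :=
  S 0 = 1 ∧ ∀ i, IsLeast {k | S i ≤ k ∧
    ({x | x ∈ Set.Icc (0 : ℝ) 1 ∧ f^[k] x = c}).Nonempty ∧
    preimDist f c k < preimDist f c (S i)} (S (i + 1))

/-- A Fibonacci map: a symmetric unimodal map whose cutting times are exactly the
Fibonacci numbers `1, 2, 3, 5, 8, …`. -/
def IsFibonacciMap (f : ℝ → ℝ) (c : ℝ) : Prop :=
  IsUnimodal f c ∧ SymmetricAbout f c ∧ IsCuttingSeq f c fibS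

/-!
Write `δₘ` for the distance from `c` to a nearest `Sₘ`-th preimage `zₘ` of `c`. By minimality of
the cutting times, no `j`-th preimage of `c` with `1 ≤ j < Sₘ₊₁` lies strictly within `δₘ` of
`c`. Hence on an interval `[a, c]` with `|a - c| < δₘ` each of the first `Sₘ₊₁` iterates stays on
one side of `c`, and `f^{Sₘ₊₁}` is strictly monotone there.

It remains to show `|uₘ₊₁ - c| < δₘ`, by induction on `m`. Since `δₘ₊₁ < δₘ`, `f^{Sₘ₊₁}` is
monotone on `[zₘ₊₁, c]`; it maps `zₘ₊₂`, reflected across `c` if needed (by symmetry of `f`), to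
an `Sₘ`-preimage of `c` between `c` and `dₘ₊₁`, so `δₘ ≤ |dₘ₊₁ - c|`. Thus `uₘ₊₁`, which lies on
the side of `dₘ₊₁` within `δₘ` of `c`, lies between `c` and `dₘ₊₁`, and the intermediate value
theorem on `[zₘ₊₁, c]` gives it an `Sₘ₊₁`-preimage strictly closer to `c` than `δₘ₊₁`. The base
case uses the fixed point `q`: `f⁻¹(c)` lies outside `[q̂, q]`, and `f² c ≤ c`.
-/

open Set Function

lemma one_le_fibS : ∀ n, 1 ≤ fibS n
  | 0 => le_rfl
  | 1 => by decide
  | n + 2 => le_add_left (one_le_fibS n)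

section RealIntervals

variable {a c d w y z : ℝ}

lemma abs_sub_lt_of_mem_uIcc_of_ne (hy : y ∈ uIcc z c) (hyz : y ≠ z) : |y - c| < |z - c| := by
  rw [mem_uIcc] at hy
  rcases hy with ⟨h₁, h₂⟩ | ⟨h₁, h₂⟩ <;> rcases hyz.lt_or_gt with h | h <;>
    rcases abs_cases (y - c) with ⟨e₁, s₁⟩ | ⟨e₁, s₁⟩ <;>
    rcases abs_cases (z - c) with ⟨e₂, s₂⟩ | ⟨e₂, s₂⟩ <;> linarith

lemma mem_uIcc_of_mul_nonneg_of_abs_le (hs : 0 ≤ (a - c) * (d - c)) (h : |a - c| ≤ |d - c|) :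
    a ∈ uIcc c d := by
  rw [mem_uIcc]
  rcases abs_cases (a - c) with ⟨e₁, h₁⟩ | ⟨e₁, h₁⟩ <;>
    rcases abs_cases (d - c) with ⟨e₂, h₂⟩ | ⟨e₂, h₂⟩ <;> rw [e₁, e₂] at h
  · exact .inl ⟨by linarith, by linarith⟩
  · exact .inr ⟨by linarith, by nlinarith⟩
  · nlinarith
  · exact .inr ⟨by linarith, by linarith⟩

lemma mem_uIcc_or_two_mul_sub_mem_uIcc (h : |w - c| ≤ |z - c|) :
    w ∈ uIcc z c ∨ 2 * c - w ∈ uIcc z c := by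
  simp only [mem_uIcc]
  rcases abs_cases (w - c) with ⟨e₁, h₁⟩ | ⟨e₁, h₁⟩ <;>
    rcases abs_cases (z - c) with ⟨e₂, h₂⟩ | ⟨e₂, h₂⟩ <;> rw [e₁, e₂] at h
  · exact .inl (.inr ⟨by linarith, by linarith⟩)
  · exact .inr (.inl ⟨by linarith, by linarith⟩)
  · exact .inr (.inr ⟨by linarith, by linarith⟩)
  · exact .inl (.inl ⟨by linarith, by linarith⟩)

end RealIntervals

lemma mapsTo_Iic_or_mapsTo_Ici_of_forall_ne {g : ℝ → ℝ} {s : Set ℝ} {c : ℝ}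
    (hs : IsPreconnected s) (hg : ContinuousOn g s) (hc : ∀ x ∈ s, g x ≠ c) :
    MapsTo g s (Iic c) ∨ MapsTo g s (Ici c) := by
  by_contra h
  simp only [not_or, MapsTo, not_forall, mem_Iic, mem_Ici, not_le] at h
  obtain ⟨⟨x₁, hx₁, h₁⟩, x₂, hx₂, h₂⟩ := h
  obtain ⟨x, hx, hgx⟩ := hs.intermediate_value hx₂ hx₁ hg ⟨h₂.le, h₁.le⟩
  exact hc x hx hgx

def critPreimages (f : ℝ → ℝ) (c : ℝ) (k : ℕ) : Set ℝ :=
  {x | x ∈ Icc (0 : ℝ) 1 ∧ f^[k] x = c}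

variable {f : ℝ → ℝ} {c : ℝ}

lemma preimDist_le_abs_sub {k : ℕ} {x : ℝ} (hx : x ∈ critPreimages f c k) :
    preimDist f c k ≤ |x - c| :=
  csInf_le ⟨0, by rintro r ⟨y, -, rfl⟩; exact abs_nonneg _⟩ ⟨x, hx, rfl⟩

lemma SymmetricAbout.iterate_two_mul_sub (hs : SymmetricAbout f c) {x : ℝ} (hx : x ∈ Icc 0 1)
    (hx' : 2 * c - x ∈ Icc 0 1) {k : ℕ} (hk : 1 ≤ k) : f^[k] (2 * c - x) = f^[k] x := by
  obtain ⟨k, rfl⟩ : ∃ j, k = j + 1 := ⟨k - 1, by omega⟩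
  rw [iterate_succ_apply, iterate_succ_apply, hs x hx hx']

namespace IsUnimodal

lemma crit_mem (hf : IsUnimodal f c) : c ∈ Icc (0 : ℝ) 1 :=
  ⟨hf.2.2.2.2.1.1.le, hf.2.2.2.2.1.2.le⟩

lemma mapsTo_iterate (hf : IsUnimodal f c) (k : ℕ) : MapsTo f^[k] (Icc 0 1) (Icc 0 1) :=
  hf.2.1.iterate k

lemma continuousOn_iterate (hf : IsUnimodal f c) (k : ℕ) : ContinuousOn f^[k] (Icc 0 1) := by
  induction k with
  | zero => exact continuousOn_id
  | succ k ih => rw [iterate_succ']; exact hf.1.comp ih (hf.mapsTo_iterate k)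

lemma apply_le_apply_crit (hf : IsUnimodal f c) {x : ℝ} (hx : x ∈ Icc 0 1) : f x ≤ f c := by
  obtain ⟨-, -, -, -, hc, hmono, hanti⟩ := hf
  rcases le_total x c with h | h
  · exact hmono.monotoneOn ⟨hx.1, h⟩ ⟨hc.1.le, le_rfl⟩ h
  · exact hanti.antitoneOn ⟨le_rfl, hc.2.le⟩ ⟨h, hx.2⟩ h

lemma lt_apply_crit_of_apply_eq {q : ℝ} (hf : IsUnimodal f c) (hq : f q = q)
    (hqI : q ∈ Ioo c 1) : q < f c := by
  obtain ⟨-, -, -, -, hc, -, hanti⟩ := hf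
  simpa [hq] using hanti ⟨le_rfl, hc.2.le⟩ ⟨hqI.1.le, hqI.2.le⟩ hqI.1

lemma comp_strictMonoOn_or_strictAntiOn (hf : IsUnimodal f c) {g : ℝ → ℝ} {s : Set ℝ}
    (hg : StrictMonoOn g s ∨ StrictAntiOn g s) (hg01 : MapsTo g s (Icc 0 1))
    (hside : MapsTo g s (Iic c) ∨ MapsTo g s (Ici c)) :
    StrictMonoOn (f ∘ g) s ∨ StrictAntiOn (f ∘ g) s := by
  obtain ⟨-, -, -, -, -, hmono, hanti⟩ := hf
  rcases hside with hside | hside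
  · have hmaps : MapsTo g s (Icc 0 c) := fun x hx => ⟨(hg01 hx).1, hside hx⟩
    rcases hg with hg | hg
    · exact .inl (hmono.comp hg hmaps)
    · exact .inr (hmono.comp_strictAntiOn hg hmaps)
  · have hmaps : MapsTo g s (Icc c 1) := fun x hx => ⟨hside hx, (hg01 hx).2⟩
    rcases hg with hg | hg
    · exact .inr (hanti.comp_strictMonoOn hg hmaps)
    · exact .inl (hanti.comp hg hmaps)

lemma critPreimages_nonempty_of_le (hf : IsUnimodal f c) {j k : ℕ} (hkj : k ≤ j)
    (h : (critPreimages f c j).Nonempty) : (critPreimages f c k).Nonempty := by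
  obtain ⟨x, hx, hfx⟩ := h
  refine ⟨f^[j - k] x, hf.mapsTo_iterate _ hx, ?_⟩
  rw [← iterate_add_apply, Nat.add_sub_cancel' hkj, hfx]

lemma exists_abs_sub_eq_preimDist (hf : IsUnimodal f c) {k : ℕ}
    (hne : (critPreimages f c k).Nonempty) :
    ∃ z ∈ critPreimages f c k, |z - c| = preimDist f c k := by
  have hK : IsCompact (critPreimages f c k) :=
    isCompact_Icc.of_isClosed_subset ((hf.continuousOn_iterate k).preimage_isClosed_of_isClosed
      isClosed_Icc isClosed_singleton) fun _ hx => hx.1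
  exact (hK.image_of_continuousOn (by fun_prop)).sInf_mem (hne.image _)

lemma exists_iterate_eq_of_mem_uIcc (hf : IsUnimodal f c) {k : ℕ}
    (hne : (critPreimages f c k).Nonempty) {a : ℝ} (ha : a ∈ uIcc c (f^[k] c)) (hac : a ≠ c) :
    ∃ y ∈ Icc (0 : ℝ) 1, f^[k] y = a ∧ |y - c| < preimDist f c k := by
  obtain ⟨z, ⟨hz, hzc⟩, hzd⟩ := hf.exists_abs_sub_eq_preimDist hne
  have hsub : uIcc z c ⊆ Icc 0 1 := uIcc_subset_Icc hz hf.crit_mem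
  obtain ⟨y, hy, hya⟩ :=
    intermediate_value_uIcc ((hf.continuousOn_iterate k).mono hsub) (by rwa [hzc])
  refine ⟨y, hsub hy, hya, hzd ▸ abs_sub_lt_of_mem_uIcc_of_ne hy ?_⟩
  rintro rfl
  exact hac (hya ▸ hzc)

end IsUnimodal

namespace IsCuttingSeq

variable {S : ℕ → ℕ}

lemma preimDist_succ_lt (hS : IsCuttingSeq f c S) (i : ℕ) :
    preimDist f c (S (i + 1)) < preimDist f c (S i) :=
  (hS.2 i).1.2.2

lemma critPreimages_nonempty (hf : IsUnimodal f c) (hS : IsCuttingSeq f c S) (i : ℕ) :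
    (critPreimages f c (S i)).Nonempty :=
  hf.critPreimages_nonempty_of_le (hS.2 i).1.1 (hS.2 i).1.2.1

lemma preimDist_le_abs_sub_of_lt (hS : IsCuttingSeq f c S) {j : ℕ} (hj : 1 ≤ j) {x : ℝ}
    (hx : x ∈ critPreimages f c j) :
    ∀ {m : ℕ}, j < S (m + 1) → preimDist f c (S m) ≤ |x - c|
  | m, hjm => by
    by_cases hmj : S m ≤ j
    · refine le_trans (not_lt.1 fun hlt => ?_) (preimDist_le_abs_sub hx)
      exact hjm.not_ge ((hS.2 m).2 ⟨hmj, ⟨x, hx⟩, hlt⟩)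
    · cases m with
      | zero => exact absurd hS.1 (by omega)
      | succ m =>
        exact (hS.preimDist_succ_lt m).le.trans (preimDist_le_abs_sub_of_lt hS hj hx (by omega))

section NearCrit

variable {m : ℕ} {a : ℝ}

lemma mapsTo_iterate_Iic_or_Ici (hf : IsUnimodal f c) (hS : IsCuttingSeq f c S)
    (ha : a ∈ Icc 0 1) (had : |a - c| < preimDist f c (S m)) {n : ℕ} (hn : n < S (m + 1)) :
    MapsTo f^[n] (uIcc a c) (Iic c) ∨ MapsTo f^[n] (uIcc a c) (Ici c) := by
  have hsub : uIcc a c ⊆ Icc 0 1 := uIcc_subset_Icc ha hf.crit_mem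
  cases n with
  | zero =>
    rcases le_total a c with h | h
    · exact .inl fun _ hx => hx.2.trans (sup_le h le_rfl)
    · exact .inr fun _ hx => (le_inf h le_rfl).trans hx.1
  | succ n =>
    refine mapsTo_Iic_or_mapsTo_Ici_of_forall_ne isPreconnected_uIcc
      ((hf.continuousOn_iterate _).mono hsub) fun x hx hxc => ?_
    have := hS.preimDist_le_abs_sub_of_lt (Nat.succ_pos n) ⟨hsub hx, hxc⟩ hn
    linarith [abs_sub_left_of_mem_uIcc (uIcc_comm a c ▸ hx)]

lemma strictMonoOn_or_strictAntiOn_iterate (hf : IsUnimodal f c) (hS : IsCuttingSeq f c S)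
    (ha : a ∈ Icc 0 1) (had : |a - c| < preimDist f c (S m)) {j : ℕ} (hj : j ≤ S (m + 1)) :
    StrictMonoOn f^[j] (uIcc a c) ∨ StrictAntiOn f^[j] (uIcc a c) := by
  induction j with
  | zero => exact .inl strictMonoOn_id
  | succ n ih =>
    rw [iterate_succ']
    exact hf.comp_strictMonoOn_or_strictAntiOn (ih (by omega))
      ((hf.mapsTo_iterate n).mono_left (uIcc_subset_Icc ha hf.crit_mem))
      (hS.mapsTo_iterate_Iic_or_Ici hf ha had (by omega))

end NearCrit

end IsCuttingSeq

namespace IsFibonacciMap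

lemma critPreimages_fibS_nonempty (hf : IsFibonacciMap f c) (i : ℕ) :
    (critPreimages f c (fibS i)).Nonempty :=
  hf.2.2.critPreimages_nonempty hf.1 i

lemma preimDist_le_abs_iterate_crit_sub (hf : IsFibonacciMap f c) (m : ℕ) :
    preimDist f c (fibS m) ≤ |f^[fibS (m + 1)] c - c| := by
  obtain ⟨z, ⟨hz, hzc⟩, hzd⟩ :=
    hf.1.exists_abs_sub_eq_preimDist (hf.critPreimages_fibS_nonempty (m + 1))
  obtain ⟨w, ⟨hw, hwc⟩, hwd⟩ :=
    hf.1.exists_abs_sub_eq_preimDist (hf.critPreimages_fibS_nonempty (m + 2))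
  obtain ⟨hf, hsym, hS⟩ := hf
  have hsub : uIcc z c ⊆ Icc 0 1 := uIcc_subset_Icc hz hf.crit_mem
  obtain ⟨w', hw'z, hw'c⟩ : ∃ w' ∈ uIcc z c, f^[fibS (m + 2)] w' = c := by
    rcases mem_uIcc_or_two_mul_sub_mem_uIcc (hzd ▸ hwd ▸ (hS.preimDist_succ_lt (m + 1)).le)
      with h | h
    · exact ⟨w, h, hwc⟩
    · exact ⟨_, h, hsym.iterate_two_mul_sub hw (hsub h) (one_le_fibS _) ▸ hwc⟩
  have hv : f^[fibS (m + 1)] w' ∈ critPreimages f c (fibS m) := by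
    refine ⟨hf.mapsTo_iterate _ (hsub hw'z), ?_⟩
    rw [← iterate_add_apply, add_comm, ← hw'c]
    rfl
  have hmono := hS.strictMonoOn_or_strictAntiOn_iterate hf hz (hzd ▸ hS.preimDist_succ_lt m) le_rfl
  have hvd : f^[fibS (m + 1)] w' ∈ uIcc c (f^[fibS (m + 1)] c) := by
    have h := hmono.elim (fun h => h.monotoneOn.mapsTo_uIcc hw'z)
      fun h => h.antitoneOn.mapsTo_uIcc hw'z
    rwa [hzc] at h
  exact (preimDist_le_abs_sub hv).trans (abs_sub_left_of_mem_uIcc hvd)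

section FixedPoint

variable {q : ℝ}

lemma iterate_two_crit_le (hf : IsFibonacciMap f c) (hq : f q = q) (hqI : q ∈ Ioo c 1) :
    f^[2] c ≤ c := by
  obtain ⟨z, ⟨hz, hzc⟩, hzd⟩ :=
    hf.1.exists_abs_sub_eq_preimDist (hf.critPreimages_fibS_nonempty 1)
  obtain ⟨hf, -, hS⟩ := hf
  have hfc : c < f c := hqI.1.trans (hf.lt_apply_crit_of_apply_eq hq hqI)
  have hfz : c ≤ f z := by
    rcases hS.mapsTo_iterate_Iic_or_Ici hf (m := 0) hz (hzd ▸ hS.preimDist_succ_lt 0)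
      (n := 1) (by decide) with h | h
    · exact absurd (h right_mem_uIcc) hfc.not_ge
    · exact h left_mem_uIcc
  have hfzc : f z ≤ f c := hf.apply_le_apply_crit hz
  have hc := hf.crit_mem
  obtain ⟨-, hmaps, -, -, -, -, hanti⟩ := hf
  calc f (f c) ≤ f (f z) := hanti.antitoneOn ⟨hfz, (hmaps hz).2⟩ ⟨hfc.le, (hmaps hc).2⟩ hfzc
    _ = c := hzc

lemma sub_lt_preimDist_fibS_zero (hf : IsFibonacciMap f c) (hq : f q = q) (hqI : q ∈ Ioo c 1)
    (hq' : 2 * c - q ∈ Icc 0 1) : q - c < preimDist f c (fibS 0) := by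
  obtain ⟨z, ⟨hz, hzc⟩, hzd⟩ :=
    hf.1.exists_abs_sub_eq_preimDist (hf.critPreimages_fibS_nonempty 0)
  replace hzc : f z = c := hzc
  obtain ⟨⟨-, -, -, -, hc, hmono, hanti⟩, hsym, -⟩ := hf
  rw [← hzd]
  rcases le_total z c with h | h
  · have : z < 2 * c - q := by
      by_contra! hle
      have := hmono.monotoneOn ⟨hq'.1, by linarith [hqI.1]⟩ ⟨hz.1, h⟩ hle
      rw [hsym q ⟨hc.1.le.trans hqI.1.le, hqI.2.le⟩ hq', hq, hzc] at this
      linarith [hqI.1]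
    rw [abs_of_nonpos (by linarith)]
    linarith
  · have : q < z := by
      by_contra! hle
      have := hanti.antitoneOn ⟨h, hz.2⟩ ⟨hqI.1.le, hqI.2.le⟩ hle
      rw [hq, hzc] at this
      linarith [hqI.1]
    rw [abs_of_nonneg (by linarith)]
    linarith

end FixedPoint

end IsFibonacciMap

/-- For `n ≥ 1`, `uₙ₊₁` is a point of `f^{-Sₙ}(uₙ)` nearest to `c` on the side of `dₙ₊₁`. -/
def IsNearestPullbackSeq (f : ℝ → ℝ) (c : ℝ) (u : ℕ → ℝ) : Prop :=
  ∀ n, 1 ≤ n →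
    u (n + 1) ∈ Icc (0 : ℝ) 1 ∧
    f^[fibS n] (u (n + 1)) = u n ∧
    (u (n + 1) - c) * (f^[fibS (n + 1)] c - c) > 0 ∧
    ∀ y ∈ Icc (0 : ℝ) 1, f^[fibS n] y = u n → |u (n + 1) - c| ≤ |y - c|

namespace IsNearestPullbackSeq

variable {u : ℕ → ℝ}

lemma mem_Icc (hf : IsUnimodal f c) (hu : IsNearestPullbackSeq f c u) {n : ℕ} (hn : 1 ≤ n) :
    u n ∈ Icc (0 : ℝ) 1 := by
  obtain ⟨m, rfl⟩ : ∃ m, n = m + 1 := ⟨n - 1, by omega⟩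
  cases m with
  | zero => exact (hu 1 le_rfl).2.1 ▸ hf.mapsTo_iterate _ (hu 1 le_rfl).1
  | succ m => exact (hu (m + 1) (by omega)).1

lemma abs_sub_lt_preimDist {q : ℝ} (hf : IsFibonacciMap f c) (hq : f q = q)
    (hqI : q ∈ Ioo c 1) (hu1 : u 1 = 2 * c - q) (hu : IsNearestPullbackSeq f c u) :
    ∀ m, |u (m + 1) - c| < preimDist f c (fibS m)
  | 0 => by
    have hq' : 2 * c - q ∈ Icc 0 1 := hu1 ▸ hu.mem_Icc hf.1 le_rfl
    rw [hu1, show 2 * c - q - c = -(q - c) by ring, abs_neg, abs_of_pos (sub_pos.2 hqI.1)]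
    exact hf.sub_lt_preimDist_fibS_zero hq hqI hq'
  | m + 1 => by
    have hside : u (m + 1) ≠ c ∧ 0 ≤ (u (m + 1) - c) * (f^[fibS (m + 1)] c - c) := by
      cases m with
      | zero =>
        have hu1c : u 1 < c := by rw [hu1]; linarith [hqI.1]
        exact ⟨hu1c.ne, mul_nonneg_of_nonpos_of_nonpos (by linarith)
          (sub_nonpos.2 (hf.iterate_two_crit_le hq hqI))⟩
      | succ m =>
        have h := (hu (m + 1) (by omega)).2.2.1
        exact ⟨fun hc => by simp [hc] at h, h.le⟩
    have hmem := mem_uIcc_of_mul_nonneg_of_abs_le hside.2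
      ((abs_sub_lt_preimDist hf hq hqI hu1 hu m).le.trans (hf.preimDist_le_abs_iterate_crit_sub m))
    obtain ⟨y, hy, hyu, hyc⟩ :=
      hf.1.exists_iterate_eq_of_mem_uIcc (hf.critPreimages_fibS_nonempty _) hmem hside.1
    exact ((hu (m + 1) (by omega)).2.2.2 y hy hyu).trans_lt hyc

end IsNearestPullbackSeq

/-- For a Fibonacci map, for every `n ≥ 1` the iterate `f^{S_n}` is strictly monotone on
the interval between `u_n` and `c`. -/
theorem fibonacci_iterate_monotone_on_u_interval (f : ℝ → ℝ) (c q : ℝ) (u : ℕ → ℝ)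
    (hf : IsFibonacciMap f c)
    (hq : f q = q) (hqI : q ∈ Set.Ioo c 1)
    (hu1 : u 1 = 2 * c - q)
    (hu : ∀ n, 1 ≤ n →
      u (n + 1) ∈ Set.Icc (0 : ℝ) 1 ∧
      f^[fibS n] (u (n + 1)) = u n ∧
      (u (n + 1) - c) * (f^[fibS (n + 1)] c - c) > 0 ∧
      ∀ y ∈ Set.Icc (0 : ℝ) 1, f^[fibS n] y = u n → |u (n + 1) - c| ≤ |y - c|) :
    ∀ n, 1 ≤ n →
      StrictMonoOn (f^[fibS n]) (Set.uIcc (u n) c) ∨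
      StrictAntiOn (f^[fibS n]) (Set.uIcc (u n) c) := by
  intro n hn
  obtain ⟨m, rfl⟩ : ∃ m, n = m + 1 := ⟨n - 1, by omega⟩
  exact hf.2.2.strictMonoOn_or_strictAntiOn_iterate hf.1
    (IsNearestPullbackSeq.mem_Icc hf.1 hu hn)
    (IsNearestPullbackSeq.abs_sub_lt_preimDist hf hq hqI hu1 hu m) le_rfl
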